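/- Let {m, n} be a γ-pair, with m = n + e i − e j for indices i ≠ j, and let k be the unique element of (supp(m) ∪ supp(n)) \ {i, j}. Then both m + e k − e i and m + e j − e k are degree-5 exponent vectors with at most three nonzero entries, and A(m + e k − e i) + A(m + e j − e k) = A(m) + A(n) + 1. (This is the combinatorial verification that the divisor 𝔻 = ∑_m A(m)·D_m has intersection number 1 with every compact curve γ_{m,n}; e.g. for {x⁴y, x⁴z} it reads 16 + 9 − 12 − 12 = 1.) -/

import Mathlib

/-!
On a degree-5 exponent vector with at most three nonzero entries, `2 A(m) = ∑ m_l² + 7`: this is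
checked on the five partitions of 5 into at most three parts. Writing `u = e k - e i` and
`v = e j - e k`, the four vectors are `m₁ = m + u`, `m₂ = m + v`, `m` and `n = m + u + v`, so
`|m₁|² + |m₂|² - |m|² - |n|² = -2 ⟨u, v⟩ = 2`, which halves to the claimed `+1`. All four vectors
are supported in `supp m ∪ supp n`, a set of three elements.
-/

/-- The indicator (standard basis) vector of `i : Fin 5`. -/
def e (i : Fin 5) : Fin 5 → ℕ := fun k => if k = i then 1 else 0

/-- The multiset of nonzero entries of an exponent vector. -/
def nonzeroParts (m : Fin 5 → ℕ) : Multiset ℕ :=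
  (Finset.univ.val.map m).filter (· ≠ 0)

/-- The coefficient `A(m)` of the toric divisor `D_m` in the divisor `𝔻`:
it is 16, 12, 10, 9, or 8 according to whether the multiset of nonzero
entries of `m` is `{5}`, `{4,1}`, `{3,2}`, `{3,1,1}`, or `{2,2,1}`. -/
def A (m : Fin 5 → ℕ) : ℕ :=
  if nonzeroParts m = {5} then 16
  else if nonzeroParts m = {4, 1} then 12
  else if nonzeroParts m = {3, 2} then 10
  else if nonzeroParts m = {3, 1, 1} then 9
  else if nonzeroParts m = {2, 2, 1} then 8
  else 0

open Finset

lemma multiset_eq_of_sum_eq_five {s : Multiset ℕ} (h0 : 0 ∉ s) (hsum : s.sum = 5)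
    (hcard : Multiset.card s ≤ 3) :
    s = {5} ∨ s = {4, 1} ∨ s = {3, 2} ∨ s = {3, 1, 1} ∨ s = {2, 2, 1} := by
  have hpos : ∀ a ∈ s, 1 ≤ a := fun a ha => Nat.one_le_iff_ne_zero.2 (ne_of_mem_of_not_mem ha h0)
  interval_cases hc : Multiset.card s
  · simp [Multiset.card_eq_zero.1 hc] at hsum
  · obtain ⟨a, rfl⟩ := Multiset.card_eq_one.1 hc
    simp_all
  · obtain ⟨a, b, rfl⟩ := Multiset.card_eq_two.1 hc
    simp only [Multiset.insert_eq_cons, Multiset.sum_cons, Multiset.sum_singleton,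
      Multiset.mem_cons, Multiset.mem_singleton, forall_eq_or_imp, forall_eq] at hsum hpos
    obtain rfl : b = 5 - a := by omega
    have : a ≤ 4 := by omega
    interval_cases a <;> first | omega | decide
  · obtain ⟨a, b, c, rfl⟩ := Multiset.card_eq_three.1 hc
    simp only [Multiset.insert_eq_cons, Multiset.sum_cons, Multiset.sum_singleton,
      Multiset.mem_cons, Multiset.mem_singleton, forall_eq_or_imp, forall_eq] at hsum hpos
    obtain rfl : c = 5 - a - b := by omega
    have : a ≤ 3 := by omega
    have : b ≤ 3 := by omega
    interval_cases a <;> interval_cases b <;> first | omega | decide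

section nonzeroParts

variable (m : Fin 5 → ℕ)

lemma nonzeroParts_eq_map : nonzeroParts m = ({l | m l ≠ 0} : Finset (Fin 5)).val.map m := by
  rw [nonzeroParts, Multiset.filter_map]
  rfl

lemma zero_notMem_nonzeroParts : 0 ∉ nonzeroParts m := by
  simp [nonzeroParts]

lemma card_nonzeroParts : Multiset.card (nonzeroParts m) = (Function.support m).ncard := by
  rw [nonzeroParts_eq_map, Multiset.card_map, Finset.card_val, ← Set.ncard_coe_finset]
  congr
  ext
  simp

lemma sum_map_nonzeroParts {f : ℕ → ℕ} (hf : f 0 = 0) :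
    ((nonzeroParts m).map f).sum = ∑ l, f (m l) := by
  rw [nonzeroParts_eq_map, Multiset.map_map]
  exact sum_subset (filter_subset _ _) (by simp_all)

end nonzeroParts

lemma two_mul_A {m : Fin 5 → ℕ} (hsum : ∑ l, m l = 5) (hsupp : (Function.support m).ncard ≤ 3) :
    2 * A m = ∑ l, m l ^ 2 + 7 := by
  rw [← sum_map_nonzeroParts m (f := (· ^ 2)) rfl]
  have hparts := multiset_eq_of_sum_eq_five (zero_notMem_nonzeroParts m)
    (by simpa [hsum] using sum_map_nonzeroParts m (f := id) rfl)
    ((card_nonzeroParts m).trans_le hsupp)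
  rcases hparts with h | h | h | h | h <;> simp only [A, h] <;> decide

lemma sum_e (p : Fin 5) : ∑ l, e p l = 1 := by
  simp [e]

/-- `x + e p - e q`; the subtraction truncates when `x q = 0`, hence the hypotheses `1 ≤ x q`. -/
def shift (x : Fin 5 → ℕ) (p q : Fin 5) : Fin 5 → ℕ := fun l => x l + e p l - e q l

section shift

variable {x : Fin 5 → ℕ} {p q : Fin 5}

lemma shift_apply_of_ne {l : Fin 5} (hp : l ≠ p) (hq : l ≠ q) : shift x p q l = x l := by
  simp [shift, e, hp, hq]

lemma one_le_shift_apply_left (hpq : p ≠ q) : 1 ≤ shift x p q p := by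
  simp [shift, e, hpq]

lemma support_shift_subset {U : Set (Fin 5)} (hx : Function.support x ⊆ U) (hp : p ∈ U) :
    Function.support (shift x p q) ⊆ U := by
  intro l hl
  by_cases hlp : l = p
  · exact hlp ▸ hp
  · apply hx
    simp only [Function.mem_support, shift, e, if_neg hlp, add_zero] at hl ⊢
    omega

lemma shift_add_e (hq : 1 ≤ x q) (l : Fin 5) : shift x p q l + e q l = x l + e p l := by
  unfold shift e
  split_ifs <;> subst_vars <;> omega

lemma cast_shift (hq : 1 ≤ x q) (l : Fin 5) : (shift x p q l : ℤ) = x l + e p l - e q l := by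
  have := shift_add_e (p := p) hq l
  omega

lemma sum_shift (hq : 1 ≤ x q) : ∑ l, shift x p q l = ∑ l, x l := by
  have h : ∑ l, (shift x p q l + e q l) = ∑ l, (x l + e p l) :=
    sum_congr rfl fun l _ => shift_add_e hq l
  simpa [sum_add_distrib, sum_e] using h

lemma one_le_of_sum_shift (hpq : p ≠ q) (h : ∑ l, shift x p q l = ∑ l, x l) : 1 ≤ x q := by
  by_contra! hq
  have : ∀ l, shift x p q l = x l + e p l := by
    intro l
    unfold shift e
    split_ifs <;> subst_vars <;> omega
  simp [this, sum_add_distrib, sum_e] at h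

end shift

section parallelogram

variable {n : Fin 5 → ℕ} {i j k : Fin 5}

lemma sq_shift_add_sq_shift (hij : i ≠ j) (hki : k ≠ i) (hkj : k ≠ j) (hj : 1 ≤ n j)
    (hk : 1 ≤ n k) (l : Fin 5) :
    shift (shift n i j) k i l ^ 2 + shift (shift n i j) j k l ^ 2 =
      shift n i j l ^ 2 + n l ^ 2 + 2 * e k l := by
  have hk' : 1 ≤ shift n i j k := by rwa [shift_apply_of_ne hki hkj]
  zify
  rw [cast_shift (one_le_shift_apply_left hij), cast_shift hk', cast_shift hj]
  unfold e
  split_ifs <;> subst_vars <;> simp_all <;> ring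

lemma sum_sq_shift_add_sum_sq_shift (hij : i ≠ j) (hki : k ≠ i) (hkj : k ≠ j) (hj : 1 ≤ n j)
    (hk : 1 ≤ n k) :
    ∑ l, shift (shift n i j) k i l ^ 2 + ∑ l, shift (shift n i j) j k l ^ 2 =
      ∑ l, shift n i j l ^ 2 + ∑ l, n l ^ 2 + 2 := by
  rw [← sum_add_distrib, sum_congr rfl fun l _ => sq_shift_add_sq_shift hij hki hkj hj hk l,
    sum_add_distrib, sum_add_distrib, ← mul_sum, sum_e, mul_one]

end parallelogram

/-- For a γ-pair `{m, n}` with `m = n + e i − e j` (`i ≠ j`) and `k` the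
remaining element of `supp m ∪ supp n`, both `m + e k − e i` and
`m + e j − e k` are degree-5 exponent vectors with at most three nonzero
entries, and `A(m + e k − e i) + A(m + e j − e k) = A(m) + A(n) + 1`.
This verifies `𝔻 · γ_{m,n} = 1` (e.g. `16 + 9 − 12 − 12 = 1` for
`{x⁴y, x⁴z}`). -/
theorem intersection_of_D_with_gamma (m n : Fin 5 → ℕ) (i j k : Fin 5)
    (hm : ∑ l, m l = 5) (hn : ∑ l, n l = 5) (hij : i ≠ j)
    (hmn : m = fun l => n l + e i l - e j l)
    (hsupp : (Function.support m ∪ Function.support n).ncard = 3)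
    (hk : k ∈ Function.support m ∪ Function.support n)
    (hki : k ≠ i) (hkj : k ≠ j) :
    let m₁ : Fin 5 → ℕ := fun l => m l + e k l - e i l
    let m₂ : Fin 5 → ℕ := fun l => m l + e j l - e k l
    (∑ l, m₁ l = 5) ∧ (Function.support m₁).ncard ≤ 3 ∧
    (∑ l, m₂ l = 5) ∧ (Function.support m₂).ncard ≤ 3 ∧
    A m₁ + A m₂ = A m + A n + 1 := by
  intro m₁ m₂
  obtain rfl : m = shift n i j := hmn
  have hnj : 1 ≤ n j := one_le_of_sum_shift hij (hm.trans hn.symm)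
  have hnk : 1 ≤ n k := by
    rw [Set.mem_union, Function.mem_support, Function.mem_support, shift_apply_of_ne hki hkj,
      or_self] at hk
    omega
  have hmk : 1 ≤ shift n i j k := by rwa [shift_apply_of_ne hki hkj]
  have hU : ∀ s ⊆ Function.support (shift n i j) ∪ Function.support n, s.ncard ≤ 3 :=
    fun s hs => hsupp ▸ Set.ncard_le_ncard hs
  have hsupp₁ : (Function.support m₁).ncard ≤ 3 :=
    hU _ (support_shift_subset Set.subset_union_left hk)
  have hsupp₂ : (Function.support m₂).ncard ≤ 3 :=
    hU _ (support_shift_subset Set.subset_union_left (Or.inr (Nat.one_le_iff_ne_zero.1 hnj)))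
  have hsum₁ : ∑ l, m₁ l = 5 := (sum_shift (one_le_shift_apply_left hij)).trans hm
  have hsum₂ : ∑ l, m₂ l = 5 := (sum_shift hmk).trans hm
  refine ⟨hsum₁, hsupp₁, hsum₂, hsupp₂, ?_⟩
  have hA₁ : 2 * A m₁ = ∑ l, m₁ l ^ 2 + 7 := two_mul_A hsum₁ hsupp₁
  have hA₂ : 2 * A m₂ = ∑ l, m₂ l ^ 2 + 7 := two_mul_A hsum₂ hsupp₂
  have hAm := two_mul_A hm (hU _ Set.subset_union_left)
  have hAn := two_mul_A hn (hU _ Set.subset_union_right)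
  have hsq : ∑ l, m₁ l ^ 2 + ∑ l, m₂ l ^ 2 = ∑ l, shift n i j l ^ 2 + ∑ l, n l ^ 2 + 2 :=
    sum_sq_shift_add_sum_sq_shift hij hki hkj hnj hnk
  omega
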